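/- arXiv:2307.15283 — 2 statements merged into one kernel-verified Lean document; each statement's English description precedes it below -/
import Mathlib

section
/- Let F : ℝⁿ → ℝᵐ satisfy the local tangential cone condition with constant η ∈ [0, 1/2), and suppose x⋆ ∈ ℝⁿ satisfies F(x⋆) = 0. Let α ∈ [1, 2(1−η)) and let (x_k)_{k≥0} be generated from an initial vector x₀ by x_{k+1} = x_k − α (F'_{I_k}(x_k))ᵀ F_{I_k}(x_k) / ‖F'_{I_k}(x_k)‖₂², where each I_k ⊆ {1,…,m} is a nonempty index subset such that F'_{I_k}(x_k) has full column rank. If there exists κ̄ > 0 such that κ_F(F'_{I_k}(x_k)) ≤ κ̄ for all k ≥ 0, then ‖x_k − x⋆‖₂² ≤ (1 − (2(1−η)α − α²) / ((1+η²) κ̄²))^k ‖x₀ − x⋆‖₂² for all k ≥ 0; in particular x_k converges to x⋆. -/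
open Matrix

/-- The singular values of a real matrix `A`: square roots of the eigenvalues of `AᵀA`. -/
noncomputable def singVals {m' : Type*} [Fintype m'] {n : ℕ}
    (A : Matrix m' (Fin n) ℝ) : Fin n → ℝ :=
  fun j => Real.sqrt ((Matrix.isHermitian_conjTranspose_mul_self A).eigenvalues j)

/-- The largest singular value of `A`, i.e. its spectral norm `‖A‖₂`. -/
noncomputable def sigmaMax {m' : Type*} [Fintype m'] {n : ℕ}
    (A : Matrix m' (Fin n) ℝ) : ℝ :=
  ⨆ j, singVals A j

/-- The smallest singular value of `A`. -/
noncomputable def sigmaMin {m' : Type*} [Fintype m'] {n : ℕ}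
    (A : Matrix m' (Fin n) ℝ) : ℝ :=
  ⨅ j, singVals A j

/-- The Frobenius norm of `A`. -/
noncomputable def frobNorm {m' : Type*} [Fintype m'] {n : ℕ}
    (A : Matrix m' (Fin n) ℝ) : ℝ :=
  Real.sqrt (∑ i, ∑ j, (A i j) ^ 2)

/-- The scaled condition number `κ_F(A) = ‖A‖_F / σ_min(A)`. -/
noncomputable def kappaF {m' : Type*} [Fintype m'] {n : ℕ}
    (A : Matrix m' (Fin n) ℝ) : ℝ :=
  frobNorm A / sigmaMin A

/-!
Write `e = x_k - x⋆`, `r = F_{I_k}(x_k)` and `A = F'_{I_k}(x_k)`. Since `F(x⋆) = 0`, the tangential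
cone condition at `(x_k, x⋆)` says `|r_i - (A e)_i| ≤ η |r_i|` for every row. Expanding
`‖e - (α / ‖A‖₂²) Aᵀ r‖²` and using `‖Aᵀ r‖ ≤ ‖A‖₂ ‖r‖` leaves a decrease of
`(2α ⟪A e, r⟫ - α² ‖r‖²) / ‖A‖₂²`, which the cone condition bounds below, row by row, by
`(2(1-η)α - α²) ‖A e‖² / ((1-η)² ‖A‖₂²)`; this is where `α ≥ 1` is needed. Finally
`‖A e‖ ≥ σ_min(A) ‖e‖` and `‖A‖₂ ≤ ‖A‖_F ≤ κ̄ σ_min(A)` give the contraction factor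
`1 - (2(1-η)α - α²) / ((1-η)² κ̄²)`, which is at most `1 - (2(1-η)α - α²) / ((1+η²) κ̄²)`
because `η ≥ 0`.
-/

open scoped RealInnerProductSpace

lemma tangentialCone_scalar_bound {a b η α : ℝ} (h : |a - b| ≤ η * |a|) (hα1 : 1 ≤ α)
    (hα2 : α ≤ 2 * (1 - η)) :
    (2 * (1 - η) * α - α ^ 2) * b ^ 2 ≤ (1 - η) ^ 2 * (2 * α * (a * b) - α ^ 2 * a ^ 2) := by
  have hsq : (a - b) ^ 2 ≤ η ^ 2 * a ^ 2 := by
    rw [← sq_abs, ← sq_abs a, ← mul_pow]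
    exact pow_le_pow_left₀ (abs_nonneg _) h 2
  have hlin : (1 - η) * a ^ 2 ≤ a * b := by
    have : a * (a - b) ≤ η * a ^ 2 := by
      calc a * (a - b) ≤ |a| * |a - b| := by rw [← abs_mul]; exact le_abs_self _
        _ ≤ |a| * (η * |a|) := by gcongr
        _ = η * a ^ 2 := by rw [mul_left_comm, ← sq, sq_abs]
    linarith
  -- The difference of the two sides is the sum of two nonnegative products:
  -- (1-η)²(2αab - α²a²) - (2(1-η)α - α²)b²
  --   = (2(1-η)α - α²)(η²a² - (a-b)²) + 2α(α - 1 + η²)(ab - (1-η)a²)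
  nlinarith [mul_nonneg (by nlinarith : 0 ≤ 2 * (1 - η) * α - α ^ 2) (sub_nonneg.2 hsq),
    mul_nonneg (by nlinarith : 0 ≤ 2 * α * (α - 1 + η ^ 2)) (sub_nonneg.2 hlin)]

lemma tangentialCone_sum_bound {ι : Type*} [Fintype ι] {r b : EuclideanSpace ℝ ι} {η α : ℝ}
    (h : ∀ i, |r i - b i| ≤ η * |r i|) (hα1 : 1 ≤ α) (hα2 : α ≤ 2 * (1 - η)) :
    (2 * (1 - η) * α - α ^ 2) * ‖b‖ ^ 2 ≤ (1 - η) ^ 2 * (2 * α * ⟪b, r⟫ - α ^ 2 * ‖r‖ ^ 2) := by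
  simp only [EuclideanSpace.real_norm_sq_eq, PiLp.inner_apply, RCLike.inner_apply, conj_trivial,
    Finset.mul_sum, ← Finset.sum_sub_distrib]
  exact Finset.sum_le_sum fun i _ => tangentialCone_scalar_bound (h i) hα1 hα2

section MatrixBounds

variable {ι : Type*} [Fintype ι] {n : ℕ} (A : Matrix ι (Fin n) ℝ)

lemma norm_toEuclideanLin_sq_eq_sum_eigenvalues (v : EuclideanSpace ℝ (Fin n)) :
    ‖toEuclideanLin A v‖ ^ 2 = ∑ j, (isHermitian_conjTranspose_mul_self A).eigenvalues j *
      ⟪(isHermitian_conjTranspose_mul_self A).eigenvectorBasis j, v⟫ ^ 2 := by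
  classical
  set hB := isHermitian_conjTranspose_mul_self A
  set b := hB.eigenvectorBasis
  have hb : ∀ j, toEuclideanLin (Aᴴ * A) (b j) = hB.eigenvalues j • b j := fun j => by
    rw [toLpLin_apply, hB.mulVec_eigenvectorBasis j]; rfl
  calc ‖toEuclideanLin A v‖ ^ 2 = ⟪v, toEuclideanLin (Aᴴ * A) v⟫ := by
        rw [← real_inner_self_eq_norm_sq, toLpLin_mul_same, LinearMap.comp_apply,
          toEuclideanLin_conjTranspose_eq_adjoint, LinearMap.adjoint_inner_right]
    _ = ∑ j, ⟪v, b j⟫ * ⟪b j, toEuclideanLin (Aᴴ * A) v⟫ := (b.sum_inner_mul_inner _ _).symm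
    _ = _ := Finset.sum_congr rfl fun j _ => by
        rw [← (isSymmetric_toEuclideanLin_iff.mpr hB) (b j) v, hb, real_inner_smul_left,
          real_inner_comm]
        ring

lemma singVals_sq (j : Fin n) :
    singVals A j ^ 2 = (isHermitian_conjTranspose_mul_self A).eigenvalues j :=
  Real.sq_sqrt (eigenvalues_conjTranspose_mul_self_nonneg A j)

lemma singVals_le_sigmaMax (j : Fin n) : singVals A j ≤ sigmaMax A :=
  le_ciSup (Set.finite_range _).bddAbove j

lemma sigmaMin_le_singVals (j : Fin n) : sigmaMin A ≤ singVals A j :=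
  ciInf_le (Set.finite_range _).bddBelow j

lemma sigmaMax_nonneg : 0 ≤ sigmaMax A :=
  Real.iSup_nonneg fun _ => Real.sqrt_nonneg _

lemma sigmaMin_nonneg : 0 ≤ sigmaMin A :=
  Real.iInf_nonneg fun _ => Real.sqrt_nonneg _

lemma sigmaMin_sq_mul_norm_sq_le (v : EuclideanSpace ℝ (Fin n)) :
    sigmaMin A ^ 2 * ‖v‖ ^ 2 ≤ ‖toEuclideanLin A v‖ ^ 2 := by
  rw [norm_toEuclideanLin_sq_eq_sum_eigenvalues, ← OrthonormalBasis.sum_sq_inner_right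
    (isHermitian_conjTranspose_mul_self A).eigenvectorBasis v, Finset.mul_sum]
  gcongr with j
  rw [← singVals_sq]
  exact pow_le_pow_left₀ (sigmaMin_nonneg A) (sigmaMin_le_singVals A j) 2

lemma norm_toEuclideanLin_le (v : EuclideanSpace ℝ (Fin n)) :
    ‖toEuclideanLin A v‖ ≤ sigmaMax A * ‖v‖ := by
  refine le_of_sq_le_sq ?_ (by have := sigmaMax_nonneg A; positivity)
  rw [norm_toEuclideanLin_sq_eq_sum_eigenvalues, mul_pow, ← OrthonormalBasis.sum_sq_inner_right
    (isHermitian_conjTranspose_mul_self A).eigenvectorBasis v, Finset.mul_sum]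
  gcongr with j
  rw [← singVals_sq]
  exact pow_le_pow_left₀ (Real.sqrt_nonneg _) (singVals_le_sigmaMax A j) 2

lemma norm_toEuclideanLin_conjTranspose_le [DecidableEq ι] (w : EuclideanSpace ℝ ι) :
    ‖toEuclideanLin Aᴴ w‖ ≤ sigmaMax A * ‖w‖ := by
  set g := toEuclideanLin Aᴴ w with hg_def
  have h : ‖g‖ * ‖g‖ ≤ sigmaMax A * ‖w‖ * ‖g‖ :=
    calc ‖g‖ * ‖g‖ = ⟪w, toEuclideanLin A g⟫ := by
          rw [← real_inner_self_eq_norm_mul_norm]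
          nth_rw 1 [show g = (toEuclideanLin A).adjoint w by
            rw [hg_def, toEuclideanLin_conjTranspose_eq_adjoint]]
          exact LinearMap.adjoint_inner_left _ _ _
      _ ≤ ‖w‖ * ‖toEuclideanLin A g‖ := real_inner_le_norm _ _
      _ ≤ ‖w‖ * (sigmaMax A * ‖g‖) := by gcongr; exact norm_toEuclideanLin_le A g
      _ = sigmaMax A * ‖w‖ * ‖g‖ := by ring
  rcases (norm_nonneg g).eq_or_lt with hzero | hpos
  · rw [← hzero]; exact mul_nonneg (sigmaMax_nonneg A) (norm_nonneg w)
  · exact le_of_mul_le_mul_right h hpos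

lemma trace_conjTranspose_mul_self_eq_sum_sq :
    (Aᴴ * A).trace = ∑ i, ∑ j, A i j ^ 2 := by
  simp only [trace, diag_apply, mul_apply, conjTranspose_apply, star_trivial, sq]
  exact Finset.sum_comm

lemma sigmaMax_le_frobNorm : sigmaMax A ≤ frobNorm A := by
  refine Real.iSup_le (fun j => Real.sqrt_le_sqrt ?_) (Real.sqrt_nonneg _)
  rw [← trace_conjTranspose_mul_self_eq_sum_sq,
    (isHermitian_conjTranspose_mul_self A).trace_eq_sum_eigenvalues]
  exact Finset.single_le_sum (fun j _ => eigenvalues_conjTranspose_mul_self_nonneg A j)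
    (Finset.mem_univ j)

lemma eigenvalues_conjTranspose_mul_self_pos (hA : A.rank = n) (j : Fin n) :
    0 < (isHermitian_conjTranspose_mul_self A).eigenvalues j := by
  refine (eigenvalues_conjTranspose_mul_self_nonneg A j).lt_of_ne' fun hj => ?_
  have h := (isHermitian_conjTranspose_mul_self A).rank_eq_card_non_zero_eigs
  rw [rank_conjTranspose_mul_self, hA] at h
  have := Fintype.card_subtype_lt (p := fun i => _ ≠ 0) (not_not_intro hj)
  simp only [Fintype.card_fin] at this
  omega

lemma sigmaMin_pos [NeZero n] (hA : A.rank = n) : 0 < sigmaMin A := by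
  obtain ⟨j, hj⟩ := exists_eq_ciInf_of_finite (f := singVals A)
  rw [sigmaMin, ← hj]
  exact Real.sqrt_pos.mpr (eigenvalues_conjTranspose_mul_self_pos A hA j)

lemma sigmaMax_le_kappaF_mul_sigmaMin [NeZero n] (hA : A.rank = n) :
    sigmaMax A ≤ kappaF A * sigmaMin A := by
  rw [kappaF, div_mul_cancel₀ _ (sigmaMin_pos A hA).ne']
  exact sigmaMax_le_frobNorm A

lemma sigmaMin_le_sigmaMax [NeZero n] : sigmaMin A ≤ sigmaMax A :=
  (sigmaMin_le_singVals A 0).trans (singVals_le_sigmaMax A 0)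

lemma one_le_kappaF [NeZero n] (hA : A.rank = n) : 1 ≤ kappaF A := by
  refine le_of_mul_le_mul_right ?_ (sigmaMin_pos A hA)
  rw [one_mul]
  exact (sigmaMin_le_sigmaMax A).trans (sigmaMax_le_kappaF_mul_sigmaMin A hA)

lemma norm_sub_smul_toEuclideanLin_conjTranspose_sq_le [DecidableEq ι] (α : ℝ)
    (e : EuclideanSpace ℝ (Fin n)) (r : EuclideanSpace ℝ ι) :
    ‖e - (α / sigmaMax A ^ 2) • toEuclideanLin Aᴴ r‖ ^ 2 ≤
      ‖e‖ ^ 2 - (2 * α * ⟪toEuclideanLin A e, r⟫ - α ^ 2 * ‖r‖ ^ 2) / sigmaMax A ^ 2 := by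
  set σ := sigmaMax A
  have hadj : ⟪e, toEuclideanLin Aᴴ r⟫ = ⟪toEuclideanLin A e, r⟫ := by
    rw [toEuclideanLin_conjTranspose_eq_adjoint, LinearMap.adjoint_inner_right]
  have hsq : ‖toEuclideanLin Aᴴ r‖ ^ 2 ≤ σ ^ 2 * ‖r‖ ^ 2 := by
    rw [← mul_pow]
    exact pow_le_pow_left₀ (norm_nonneg _) (norm_toEuclideanLin_conjTranspose_le A r) 2
  have hcoef : (α / σ ^ 2) ^ 2 * σ ^ 2 = α ^ 2 / σ ^ 2 := by
    rcases eq_or_ne σ 0 with hσ | hσ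
    · simp [hσ]
    · field_simp
  calc ‖e - (α / σ ^ 2) • toEuclideanLin Aᴴ r‖ ^ 2
      = ‖e‖ ^ 2 - 2 * (α / σ ^ 2) * ⟪toEuclideanLin A e, r⟫
          + (α / σ ^ 2) ^ 2 * ‖toEuclideanLin Aᴴ r‖ ^ 2 := by
        rw [norm_sub_sq_real, real_inner_smul_right, hadj, norm_smul, mul_pow, Real.norm_eq_abs,
          sq_abs]
        ring
    _ ≤ ‖e‖ ^ 2 - 2 * (α / σ ^ 2) * ⟪toEuclideanLin A e, r⟫
          + (α / σ ^ 2) ^ 2 * (σ ^ 2 * ‖r‖ ^ 2) := by gcongr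
    _ = _ := by rw [← mul_assoc, hcoef]; ring

theorem norm_sq_kaczmarz_step_le [DecidableEq ι] [NeZero n] (hA : A.rank = n) {κ η α : ℝ}
    (hκ : kappaF A ≤ κ) (hα1 : 1 ≤ α) (hα2 : α ≤ 2 * (1 - η)) {e : EuclideanSpace ℝ (Fin n)}
    {r : EuclideanSpace ℝ ι} (hcone : ∀ i, |r i - toEuclideanLin A e i| ≤ η * |r i|) :
    ‖e - (α / sigmaMax A ^ 2) • toEuclideanLin Aᴴ r‖ ^ 2 ≤
      (1 - (2 * (1 - η) * α - α ^ 2) / ((1 - η) ^ 2 * κ ^ 2)) * ‖e‖ ^ 2 := by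
  set K := 2 * (1 - η) * α - α ^ 2
  set D := 2 * α * ⟪toEuclideanLin A e, r⟫ - α ^ 2 * ‖r‖ ^ 2
  have hmin := sigmaMin_pos A hA
  have hmax : 0 < sigmaMax A := hmin.trans_le (sigmaMin_le_sigmaMax A)
  have hK : 0 ≤ K := by nlinarith
  have hκpos : 0 < κ := zero_lt_one.trans_le ((one_le_kappaF A hA).trans hκ)
  have hmax_le : sigmaMax A ^ 2 ≤ κ ^ 2 * sigmaMin A ^ 2 := by
    rw [← mul_pow]
    refine pow_le_pow_left₀ hmax.le ((sigmaMax_le_kappaF_mul_sigmaMin A hA).trans ?_) 2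
    gcongr
  have hcone_sum : K * (sigmaMin A ^ 2 * ‖e‖ ^ 2) ≤ (1 - η) ^ 2 * D :=
    (mul_le_mul_of_nonneg_left (sigmaMin_sq_mul_norm_sq_le A e) hK).trans
      (tangentialCone_sum_bound hcone hα1 hα2)
  have key : K * ‖e‖ ^ 2 / ((1 - η) ^ 2 * κ ^ 2) ≤ D / sigmaMax A ^ 2 := by
    have h1η : 0 < 1 - η := by linarith
    rw [div_le_div_iff₀ (by positivity) (by positivity)]
    calc K * ‖e‖ ^ 2 * sigmaMax A ^ 2 ≤ K * ‖e‖ ^ 2 * (κ ^ 2 * sigmaMin A ^ 2) := by gcongr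
      _ = K * (sigmaMin A ^ 2 * ‖e‖ ^ 2) * κ ^ 2 := by ring
      _ ≤ (1 - η) ^ 2 * D * κ ^ 2 := by gcongr
      _ = D * ((1 - η) ^ 2 * κ ^ 2) := by ring
  calc ‖e - (α / sigmaMax A ^ 2) • toEuclideanLin Aᴴ r‖ ^ 2 ≤ ‖e‖ ^ 2 - D / sigmaMax A ^ 2 :=
        norm_sub_smul_toEuclideanLin_conjTranspose_sq_le A α e r
    _ ≤ ‖e‖ ^ 2 - K * ‖e‖ ^ 2 / ((1 - η) ^ 2 * κ ^ 2) := by gcongr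
    _ = _ := by ring

end MatrixBounds

lemma toEuclideanLin_conjTranspose_of_rows {ι : Type*} [Fintype ι] [DecidableEq ι] {n : ℕ}
    (u : ι → EuclideanSpace ℝ (Fin n)) (r : ι → ℝ) :
    toEuclideanLin (Matrix.of fun i j => u i j)ᴴ (WithLp.toLp 2 r) = ∑ i, r i • u i := by
  ext j
  simp [toLpLin_apply, mulVec, dotProduct, mul_comm]

section GeometricConvergence
variable {E : Type*} [SeminormedAddCommGroup E] {x : ℕ → E} {a : E} {q : ℝ}

lemma sq_norm_sub_le_pow_mul (hq : 0 ≤ q) (h : ∀ k, ‖x (k + 1) - a‖ ^ 2 ≤ q * ‖x k - a‖ ^ 2)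
    (k : ℕ) : ‖x k - a‖ ^ 2 ≤ q ^ k * ‖x 0 - a‖ ^ 2 := by
  induction k with
  | zero => simp
  | succ k ih =>
    calc ‖x (k + 1) - a‖ ^ 2 ≤ q * ‖x k - a‖ ^ 2 := h k
      _ ≤ q * (q ^ k * ‖x 0 - a‖ ^ 2) := by gcongr
      _ = q ^ (k + 1) * ‖x 0 - a‖ ^ 2 := by ring

lemma tendsto_of_sq_norm_sub_le_pow_mul (hq0 : 0 ≤ q) (hq1 : q < 1) {C : ℝ}
    (h : ∀ k, ‖x k - a‖ ^ 2 ≤ q ^ k * C) : Filter.Tendsto x Filter.atTop (nhds a) := by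
  have hsq : Filter.Tendsto (fun k => ‖x k - a‖ ^ 2) Filter.atTop (nhds 0) := by
    refine squeeze_zero (fun k => sq_nonneg _) h ?_
    simpa using (tendsto_pow_atTop_nhds_zero_of_lt_one hq0 hq1).mul_const C
  refine tendsto_iff_norm_sub_tendsto_zero.mpr ?_
  simpa [Real.sqrt_sq (norm_nonneg _)] using hsq.sqrt

end GeometricConvergence

theorem norm_sq_sub_kaczmarz_update_le {ι : Type*} [DecidableEq ι] {n : ℕ} [NeZero n]
    {s : Finset ι} {u : ι → EuclideanSpace ℝ (Fin n)} {res : ι → ℝ} {A : Matrix s (Fin n) ℝ}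
    (hA : A = Matrix.of fun (i : s) j => u i.1 j) (hrank : A.rank = n) {κ η α : ℝ}
    (hκ : kappaF A ≤ κ) (hα1 : 1 ≤ α) (hα2 : α ≤ 2 * (1 - η)) {y xstar : EuclideanSpace ℝ (Fin n)}
    (hcone : ∀ i ∈ s, |res i - ∑ j, u i j * (y j - xstar j)| ≤ η * |res i|) :
    ‖y - (α / sigmaMax A ^ 2) • ∑ i ∈ s, res i • u i - xstar‖ ^ 2 ≤
      (1 - (2 * (1 - η) * α - α ^ 2) / ((1 - η) ^ 2 * κ ^ 2)) * ‖y - xstar‖ ^ 2 := by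
  have hsum : toEuclideanLin Aᴴ (WithLp.toLp 2 fun i => res i.1) = ∑ i ∈ s, res i • u i := by
    rw [hA, toEuclideanLin_conjTranspose_of_rows]
    exact Finset.sum_coe_sort s fun i => res i • u i
  rw [← hsum, sub_right_comm]
  refine norm_sq_kaczmarz_step_le A hrank hκ hα1 hα2 fun i => ?_
  simpa [hA, toLpLin_apply, mulVec, dotProduct] using hcone i.1 i.2

theorem abnk_constant_stepsize_convergence_general
    {n m : ℕ}
    (F : Fin m → EuclideanSpace ℝ (Fin n) → ℝ)
    (grad : Fin m → EuclideanSpace ℝ (Fin n) → EuclideanSpace ℝ (Fin n))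
    (η : ℝ) (hη0 : 0 ≤ η)
    -- local tangential cone condition with constant η
    (hltcc : ∀ i (x₁ x₂ : EuclideanSpace ℝ (Fin n)),
      |F i x₁ - F i x₂ - ∑ j, grad i x₁ j * (x₁ j - x₂ j)| ≤ η * |F i x₁ - F i x₂|)
    (xstar : EuclideanSpace ℝ (Fin n)) (hstar : ∀ i, F i xstar = 0)
    (α : ℝ) (hα1 : 1 ≤ α) (hα2 : α < 2 * (1 - η))
    (x : ℕ → EuclideanSpace ℝ (Fin n))
    (I : ℕ → Finset (Fin m))
    -- the row-submatrices F'_{I_k}(x_k) of the Jacobian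
    (J : ∀ k, Matrix {i // i ∈ I k} (Fin n) ℝ)
    (hJdef : ∀ k, J k = Matrix.of fun (i : {i // i ∈ I k}) (j : Fin n) => grad i.1 (x k) j)
    -- each F'_{I_k}(x_k) has full column rank
    (hrank : ∀ k, (J k).rank = n)
    -- x_{k+1} = x_k − α (F'_{I_k}(x_k))ᵀ F_{I_k}(x_k) / ‖F'_{I_k}(x_k)‖₂²
    (hupd : ∀ k, x (k + 1)
      = x k - (α / sigmaMax (J k) ^ 2) • ∑ i ∈ I k, F i (x k) • grad i (x k))
    (κbar : ℝ)
    (hκ : ∀ k, kappaF (J k) ≤ κbar) :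
    (∀ k, ‖x k - xstar‖ ^ 2
        ≤ (1 - (2 * (1 - η) * α - α ^ 2) / ((1 + η ^ 2) * κbar ^ 2)) ^ k
            * ‖x 0 - xstar‖ ^ 2)
      ∧ Filter.Tendsto x Filter.atTop (nhds xstar) := by
  obtain rfl | hn := n.eq_zero_or_pos
  · have hx : ∀ k, x k = xstar := fun k => Subsingleton.elim _ _
    simp [hx]
  have : NeZero n := ⟨hn.ne'⟩
  set K := 2 * (1 - η) * α - α ^ 2
  have hκ1 : 1 ≤ κbar := (one_le_kappaF _ (hrank 0)).trans (hκ 0)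
  have hK : 0 < K := by nlinarith
  have h1η : 0 < 1 - η := by linarith
  have hstep : ∀ k, ‖x (k + 1) - xstar‖ ^ 2
      ≤ (1 - K / ((1 + η ^ 2) * κbar ^ 2)) * ‖x k - xstar‖ ^ 2 := fun k => by
    rw [hupd k]
    refine (norm_sq_sub_kaczmarz_update_le (hJdef k) (hrank k) (hκ k) hα1 hα2.le
      fun i _ => by simpa [hstar] using hltcc i (x k) xstar).trans ?_
    have : (1 - η) ^ 2 ≤ 1 + η ^ 2 := by nlinarith
    gcongr
  have hq0 : 0 ≤ 1 - K / ((1 + η ^ 2) * κbar ^ 2) := by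
    rw [sub_nonneg, div_le_one (by positivity)]
    nlinarith
  have hq1 : 1 - K / ((1 + η ^ 2) * κbar ^ 2) < 1 := by
    have : 0 < K / ((1 + η ^ 2) * κbar ^ 2) := by positivity
    linarith
  have hrate := sq_norm_sub_le_pow_mul hq0 hstep
  exact ⟨hrate, tendsto_of_sq_norm_sub_le_pow_mul hq0 hq1 hrate⟩

/-- the averaging block nonlinear Kaczmarz method with constant stepsize
`α ∈ [1, 2(1−η))` converges: if `κ_F(F'_{I_k}(x_k)) ≤ κ̄` for all `k`, then
`‖x_k − x⋆‖₂² ≤ (1 − (2(1−η)α − α²)/((1+η²) κ̄²))^k ‖x₀ − x⋆‖₂²` and `x_k → x⋆`. -/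
theorem abnk_constant_stepsize_convergence
    {n m : ℕ}
    (F : Fin m → EuclideanSpace ℝ (Fin n) → ℝ)
    (grad : Fin m → EuclideanSpace ℝ (Fin n) → EuclideanSpace ℝ (Fin n))
    (η : ℝ) (hη0 : 0 ≤ η) (hη : η < 1 / 2)
    -- F is differentiable with Jacobian whose i-th row is ∇F_i
    (hdiff : ∀ i x, HasGradientAt (F i) (grad i x) x)
    -- local tangential cone condition with constant η
    (hltcc : ∀ i (x₁ x₂ : EuclideanSpace ℝ (Fin n)),
      |F i x₁ - F i x₂ - ∑ j, grad i x₁ j * (x₁ j - x₂ j)| ≤ η * |F i x₁ - F i x₂|)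
    (xstar : EuclideanSpace ℝ (Fin n)) (hstar : ∀ i, F i xstar = 0)
    (α : ℝ) (hα1 : 1 ≤ α) (hα2 : α < 2 * (1 - η))
    (x : ℕ → EuclideanSpace ℝ (Fin n))
    (I : ℕ → Finset (Fin m)) (hI : ∀ k, (I k).Nonempty)
    -- the row-submatrices F'_{I_k}(x_k) of the Jacobian
    (J : ∀ k, Matrix {i // i ∈ I k} (Fin n) ℝ)
    (hJdef : ∀ k, J k = Matrix.of fun (i : {i // i ∈ I k}) (j : Fin n) => grad i.1 (x k) j)
    -- each F'_{I_k}(x_k) has full column rank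
    (hrank : ∀ k, (J k).rank = n)
    -- x_{k+1} = x_k − α (F'_{I_k}(x_k))ᵀ F_{I_k}(x_k) / ‖F'_{I_k}(x_k)‖₂²
    (hupd : ∀ k, x (k + 1)
      = x k - (α / sigmaMax (J k) ^ 2) • ∑ i ∈ I k, F i (x k) • grad i (x k))
    (κbar : ℝ) (hκ0 : 0 < κbar)
    (hκ : ∀ k, kappaF (J k) ≤ κbar) :
    (∀ k, ‖x k - xstar‖ ^ 2
        ≤ (1 - (2 * (1 - η) * α - α ^ 2) / ((1 + η ^ 2) * κbar ^ 2)) ^ k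
            * ‖x 0 - xstar‖ ^ 2)
      ∧ Filter.Tendsto x Filter.atTop (nhds xstar) :=
  abnk_constant_stepsize_convergence_general F grad η hη0 hltcc xstar hstar α hα1 hα2 x I J hJdef
    hrank hupd κbar hκ
end

section
/- Let F : ℝⁿ → ℝᵐ satisfy the local tangential cone condition with constant η ∈ [0, 1/2), and suppose x⋆ ∈ ℝⁿ satisfies F(x⋆) = 0. Let I ⊆ {1,…,m} be a nonempty index subset, let x_k ∈ ℝⁿ be such that F'_I(x_k) has full column rank and (F'_I(x_k))ᵀ F_I(x_k) ≠ 0, let δ ∈ (0, 2(1−η)), and define x_{k+1} = x_k − δ (‖F_I(x_k)‖₂² / ‖(F'_I(x_k))ᵀ F_I(x_k)‖₂²) (F'_I(x_k))ᵀ F_I(x_k). Then ‖x_{k+1} − x⋆‖₂² ≤ (1 − (2(1−η)δ − δ²) / ((1+η²) κ²(F'_I(x_k)))) ‖x_k − x⋆‖₂², where κ(A) = σ_max(A)/σ_min(A). -/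
/-!
Write `e = x_k - x⋆`, `r = F_I(x_k)` and `A = F'_I(x_k)`. Expanding the square, the step gives
`‖x_{k+1} - x⋆‖² = ‖e‖² - K ‖r‖² / ‖Aᵀ r‖²` with `K = 2δ ⟪r, A e⟫ - δ² ‖r‖²`. The tangential
cone condition at the pair `(x_k, x⋆)` reads `|r_i - (A e)_i| ≤ η |r_i|` because `F(x⋆) = 0`, and
coordinatewise this yields `(2(1-η)δ - δ²) ‖A e‖² ≤ (1 + η²) K`. The rate follows from
`σ_min² ‖e‖² ≤ ‖A e‖²` and `‖Aᵀ r‖² ≤ σ_max² ‖r‖²`, both read off the spectral decomposition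
of `AᵀA`.
-/

open Matrix

/-- The condition number `κ(A) = σ_max(A) / σ_min(A)`. -/
noncomputable def kappa {m' : Type*} [Fintype m'] {n : ℕ}
    (A : Matrix m' (Fin n) ℝ) : ℝ :=
  sigmaMax A / sigmaMin A

lemma dotProduct_self_nonneg {ι : Type*} [Fintype ι] (v : ι → ℝ) : 0 ≤ v ⬝ᵥ v := by
  simpa using dotProduct_star_self_nonneg v

lemma dotProduct_self_pos {ι : Type*} [Fintype ι] {v : ι → ℝ} (hv : v ≠ 0) : 0 < v ⬝ᵥ v := by
  simpa using dotProduct_star_self_pos_iff.mpr hv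

lemma dotProduct_mul_self_le {ι : Type*} [Fintype ι] (u v : ι → ℝ) :
    (u ⬝ᵥ v) * (u ⬝ᵥ v) ≤ (u ⬝ᵥ u) * (v ⬝ᵥ v) := by
  simpa only [EuclideanSpace.inner_toLp_toLp, star_trivial, dotProduct_comm] using
    real_inner_mul_inner_self_le (WithLp.toLp 2 u) (WithLp.toLp 2 v)

theorem Matrix.IsHermitian.exists_dotProduct_mulVec_eq_sum_eigenvalues {ι : Type*} [Fintype ι]
    [DecidableEq ι] {M : Matrix ι ι ℝ} (hM : M.IsHermitian) (v : ι → ℝ) :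
    ∃ w : ι → ℝ, w ⬝ᵥ w = v ⬝ᵥ v ∧ v ⬝ᵥ (M *ᵥ v) = ∑ j, hM.eigenvalues j * (w j * w j) := by
  set U : Matrix ι ι ℝ := (hM.eigenvectorUnitary : Matrix ι ι ℝ)
  have hU : U * Uᵀ = 1 := by
    simpa [star_eq_conjTranspose] using mem_unitaryGroup_iff.mp hM.eigenvectorUnitary.2
  refine ⟨Uᵀ *ᵥ v, ?_, ?_⟩
  · rw [dotProduct_mulVec, ← mulVec_transpose, transpose_transpose, mulVec_mulVec, hU, one_mulVec]
  · have hMU : M = U * diagonal hM.eigenvalues * Uᵀ := by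
      conv_lhs => rw [hM.spectral_theorem]
      simp [Unitary.conjStarAlgAut_apply, U, star_eq_conjTranspose]
    rw [show v ⬝ᵥ (M *ᵥ v) = v ⬝ᵥ ((U * diagonal hM.eigenvalues * Uᵀ) *ᵥ v) by rw [← hMU],
      ← mulVec_mulVec, ← mulVec_mulVec, dotProduct_mulVec, ← mulVec_transpose,
      dotProduct]
    exact Finset.sum_congr rfl fun j _ => by rw [mulVec_diagonal]; ring

section SingularValues

variable {ι : Type*} [Fintype ι] {n : ℕ}

lemma sq_singVals (A : Matrix ι (Fin n) ℝ) (j : Fin n) :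
    singVals A j ^ 2 = (isHermitian_conjTranspose_mul_self A).eigenvalues j :=
  Real.sq_sqrt ((posSemidef_conjTranspose_mul_self A).eigenvalues_nonneg j)

lemma sq_sigmaMin_le_eigenvalues (A : Matrix ι (Fin n) ℝ) (j : Fin n) :
    sigmaMin A ^ 2 ≤ (isHermitian_conjTranspose_mul_self A).eigenvalues j := by
  rw [← sq_singVals]
  exact pow_le_pow_left₀ (Real.iInf_nonneg fun _ => Real.sqrt_nonneg _)
    (ciInf_le (Set.finite_range _).bddBelow j) 2

lemma eigenvalues_le_sq_sigmaMax (A : Matrix ι (Fin n) ℝ) (j : Fin n) :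
    (isHermitian_conjTranspose_mul_self A).eigenvalues j ≤ sigmaMax A ^ 2 := by
  rw [← sq_singVals]
  exact pow_le_pow_left₀ (Real.sqrt_nonneg _)
    (le_ciSup (Set.finite_range (singVals A)).bddAbove j) 2

lemma dotProduct_conjTranspose_mul_self_mulVec (A : Matrix ι (Fin n) ℝ) (v : Fin n → ℝ) :
    v ⬝ᵥ ((Aᴴ * A) *ᵥ v) = (A *ᵥ v) ⬝ᵥ (A *ᵥ v) := by
  rw [conjTranspose_eq_transpose_of_trivial, ← mulVec_mulVec, dotProduct_mulVec,
    ← mulVec_transpose, transpose_transpose]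

theorem sq_sigmaMin_mul_le_mulVec_dotProduct (A : Matrix ι (Fin n) ℝ) (v : Fin n → ℝ) :
    sigmaMin A ^ 2 * (v ⬝ᵥ v) ≤ (A *ᵥ v) ⬝ᵥ (A *ᵥ v) := by
  obtain ⟨w, hw, hv⟩ :=
    (isHermitian_conjTranspose_mul_self A).exists_dotProduct_mulVec_eq_sum_eigenvalues v
  rw [← dotProduct_conjTranspose_mul_self_mulVec, hv, ← hw, dotProduct, Finset.mul_sum]
  exact Finset.sum_le_sum fun j _ =>
    mul_le_mul_of_nonneg_right (sq_sigmaMin_le_eigenvalues A j) (mul_self_nonneg _)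

theorem mulVec_dotProduct_le_sq_sigmaMax_mul (A : Matrix ι (Fin n) ℝ) (v : Fin n → ℝ) :
    (A *ᵥ v) ⬝ᵥ (A *ᵥ v) ≤ sigmaMax A ^ 2 * (v ⬝ᵥ v) := by
  obtain ⟨w, hw, hv⟩ :=
    (isHermitian_conjTranspose_mul_self A).exists_dotProduct_mulVec_eq_sum_eigenvalues v
  rw [← dotProduct_conjTranspose_mul_self_mulVec, hv, ← hw, dotProduct, Finset.mul_sum]
  exact Finset.sum_le_sum fun j _ =>
    mul_le_mul_of_nonneg_right (eigenvalues_le_sq_sigmaMax A j) (mul_self_nonneg _)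

theorem transpose_mulVec_dotProduct_le_sq_sigmaMax_mul (A : Matrix ι (Fin n) ℝ) (r : ι → ℝ) :
    (Aᵀ *ᵥ r) ⬝ᵥ (Aᵀ *ᵥ r) ≤ sigmaMax A ^ 2 * (r ⬝ᵥ r) := by
  set g := Aᵀ *ᵥ r
  have hG : g ⬝ᵥ g = r ⬝ᵥ (A *ᵥ g) := by rw [dotProduct_mulVec, vecMul_transpose, dotProduct_comm]
  have hcs : (g ⬝ᵥ g) * (g ⬝ᵥ g) ≤ (r ⬝ᵥ r) * (sigmaMax A ^ 2 * (g ⬝ᵥ g)) := by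
    calc (g ⬝ᵥ g) * (g ⬝ᵥ g) = (r ⬝ᵥ (A *ᵥ g)) * (r ⬝ᵥ (A *ᵥ g)) := by rw [hG]
      _ ≤ (r ⬝ᵥ r) * ((A *ᵥ g) ⬝ᵥ (A *ᵥ g)) := dotProduct_mul_self_le _ _
      _ ≤ (r ⬝ᵥ r) * (sigmaMax A ^ 2 * (g ⬝ᵥ g)) :=
        mul_le_mul_of_nonneg_left (mulVec_dotProduct_le_sq_sigmaMax_mul A g)
          (dotProduct_self_nonneg r)
  rcases (dotProduct_self_nonneg g).eq_or_lt with hg | hg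
  · rw [← hg]; exact mul_nonneg (sq_nonneg _) (dotProduct_self_nonneg r)
  · exact le_of_mul_le_mul_right (by linarith) hg

end SingularValues

lemma tangential_cone_descent {η δ r s : ℝ} (hη : 0 ≤ η) (hδ : 0 ≤ δ) (hδη : δ ≤ 2 * (1 - η))
    (hcone : |r - s| ≤ η * |r|) :
    (2 * (1 - η) * δ - δ ^ 2) * (s * s) ≤ (1 + η ^ 2) * (2 * δ * (r * s) - δ ^ 2 * (r * r)) := by
  have hsq : (r - s) ^ 2 ≤ η ^ 2 * (r * r) := by
    simpa [mul_pow, sq_abs, ← sq] using pow_le_pow_left₀ (abs_nonneg _) hcone 2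
  have hlin : |r * r - r * s| ≤ η * (r * r) := by
    rw [← mul_sub, abs_mul, ← abs_mul_abs_self r]
    nlinarith [abs_nonneg r]
  obtain ⟨hlo, hhi⟩ := abs_le.mp hlin
  have hc : 0 ≤ 2 * (1 - η) * δ - δ ^ 2 := by nlinarith
  -- eliminate `s * s` with `hsq`; what remains is linear in `r * s ∈ [(1 - η) r², (1 + η) r²]`
  linarith [mul_nonneg hc (sub_nonneg.mpr hsq),
    mul_nonneg hc (by linarith : 0 ≤ (1 + η) * (r * r) - r * s),
    mul_nonneg (mul_nonneg hδ (by positivity : 0 ≤ 2 * η * (1 + η) + δ))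
      (by linarith : 0 ≤ r * s - (1 - η) * (r * r))]

theorem tangential_cone_descent_dotProduct {ι : Type*} [Fintype ι] {η δ : ℝ} {r s : ι → ℝ}
    (hη : 0 ≤ η) (hδ : 0 ≤ δ) (hδη : δ ≤ 2 * (1 - η)) (hcone : ∀ i, |r i - s i| ≤ η * |r i|) :
    (2 * (1 - η) * δ - δ ^ 2) * (s ⬝ᵥ s)
      ≤ (1 + η ^ 2) * (2 * δ * (r ⬝ᵥ s) - δ ^ 2 * (r ⬝ᵥ r)) := by
  simp only [dotProduct, Finset.mul_sum, ← Finset.sum_sub_distrib]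
  exact Finset.sum_le_sum fun i _ => tangential_cone_descent hη hδ hδη (hcone i)

lemma dotProduct_sub_div_smul_self {ι : Type*} [Fintype ι] (e g : ι → ℝ) (δ a : ℝ)
    (hg : g ⬝ᵥ g ≠ 0) :
    (e - (δ * a / (g ⬝ᵥ g)) • g) ⬝ᵥ (e - (δ * a / (g ⬝ᵥ g)) • g)
      = e ⬝ᵥ e - (2 * δ * (g ⬝ᵥ e) - δ ^ 2 * a) * a / (g ⬝ᵥ g) := by
  simp only [sub_dotProduct, dotProduct_sub, smul_dotProduct, dotProduct_smul, smul_eq_mul,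
    dotProduct_comm e g]
  field_simp
  ring

theorem div_kappa_sq_le_of_mulVec_bound {ι : Type*} [Fintype ι] {n : ℕ} (A : Matrix ι (Fin n) ℝ)
    {r : ι → ℝ} {e : Fin n → ℝ} {b c K : ℝ} (hb : 0 < b) (hc : 0 ≤ c)
    (hcK : c * ((A *ᵥ e) ⬝ᵥ (A *ᵥ e)) ≤ b * K) (hg : Aᵀ *ᵥ r ≠ 0) :
    c * (e ⬝ᵥ e) / (b * kappa A ^ 2) ≤ K * (r ⬝ᵥ r) / ((Aᵀ *ᵥ r) ⬝ᵥ (Aᵀ *ᵥ r)) := by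
  have hG := dotProduct_self_pos hg
  have hup := transpose_mulVec_dotProduct_le_sq_sigmaMax_mul A r
  have hlow : c * (sigmaMin A ^ 2 * (e ⬝ᵥ e)) ≤ b * K :=
    (mul_le_mul_of_nonneg_left (sq_sigmaMin_mul_le_mulVec_dotProduct A e) hc).trans hcK
  have ha := dotProduct_self_nonneg r
  have hK : 0 ≤ K := (mul_nonneg_iff_of_pos_left hb).mp
    ((mul_nonneg hc (dotProduct_self_nonneg _)).trans hcK)
  rcases eq_or_ne (sigmaMin A) 0 with hmin | hmin
  -- `kappa A = sigmaMax A / 0 = 0`, so the left-hand side is `c * (e ⬝ᵥ e) / 0 = 0`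
  · rw [kappa, hmin, div_zero, zero_pow two_ne_zero, mul_zero, div_zero]
    positivity
  have hmax : sigmaMax A ≠ 0 := by
    rintro h
    rw [h] at hup
    linarith
  calc c * (e ⬝ᵥ e) / (b * kappa A ^ 2)
      = c * (sigmaMin A ^ 2 * (e ⬝ᵥ e)) / (b * sigmaMax A ^ 2) := by
        rw [kappa]; field_simp
    _ ≤ b * K / (b * sigmaMax A ^ 2) := div_le_div_of_nonneg_right hlow (by positivity)
    _ = K / sigmaMax A ^ 2 := by field_simp
    _ ≤ K * (r ⬝ᵥ r) / ((Aᵀ *ᵥ r) ⬝ᵥ (Aᵀ *ᵥ r)) := by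
        rw [div_le_div_iff₀ (by positivity) hG]
        nlinarith [mul_le_mul_of_nonneg_left hup hK]

theorem kaczmarz_step_dotProduct_le {ι : Type*} [Fintype ι] {n : ℕ} (A : Matrix ι (Fin n) ℝ)
    {r : ι → ℝ} {e : Fin n → ℝ} {η δ : ℝ} (hη : 0 ≤ η) (hδ : 0 ≤ δ) (hδη : δ ≤ 2 * (1 - η))
    (hcone : ∀ i, |r i - (A *ᵥ e) i| ≤ η * |r i|) (hg : Aᵀ *ᵥ r ≠ 0) :
    (e - (δ * (r ⬝ᵥ r) / ((Aᵀ *ᵥ r) ⬝ᵥ (Aᵀ *ᵥ r))) • (Aᵀ *ᵥ r)) ⬝ᵥ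
        (e - (δ * (r ⬝ᵥ r) / ((Aᵀ *ᵥ r) ⬝ᵥ (Aᵀ *ᵥ r))) • (Aᵀ *ᵥ r))
      ≤ (1 - (2 * (1 - η) * δ - δ ^ 2) / ((1 + η ^ 2) * kappa A ^ 2)) * (e ⬝ᵥ e) := by
  have hgr : (Aᵀ *ᵥ r) ⬝ᵥ e = r ⬝ᵥ (A *ᵥ e) := by rw [dotProduct_mulVec, mulVec_transpose]
  rw [dotProduct_sub_div_smul_self _ _ _ _ (dotProduct_self_pos hg).ne', hgr]
  have hrate := div_kappa_sq_le_of_mulVec_bound A (by positivity) (by nlinarith)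
    (tangential_cone_descent_dotProduct hη hδ hδη hcone) hg
  linarith [show (1 - (2 * (1 - η) * δ - δ ^ 2) / ((1 + η ^ 2) * kappa A ^ 2)) * (e ⬝ᵥ e)
    = e ⬝ᵥ e - (2 * (1 - η) * δ - δ ^ 2) * (e ⬝ᵥ e) / ((1 + η ^ 2) * kappa A ^ 2) by ring]

lemma EuclideanSpace.real_norm_sq_eq_dotProduct {ι : Type*} [Fintype ι] (x : EuclideanSpace ℝ ι) :
    ‖x‖ ^ 2 = x.ofLp ⬝ᵥ x.ofLp := by
  rw [← real_inner_self_eq_norm_sq, EuclideanSpace.inner_eq_star_dotProduct, star_trivial]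

theorem abnk_adaptive_stepsize_convergence_factor_general
    {n m : ℕ}
    (F : Fin m → EuclideanSpace ℝ (Fin n) → ℝ)
    (grad : Fin m → EuclideanSpace ℝ (Fin n) → EuclideanSpace ℝ (Fin n))
    (η : ℝ) (hη0 : 0 ≤ η)
    -- local tangential cone condition with constant η
    (hltcc : ∀ i (x₁ x₂ : EuclideanSpace ℝ (Fin n)),
      |F i x₁ - F i x₂ - ∑ j, grad i x₁ j * (x₁ j - x₂ j)| ≤ η * |F i x₁ - F i x₂|)
    (xstar : EuclideanSpace ℝ (Fin n)) (hstar : ∀ i, F i xstar = 0)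
    (S : Finset (Fin m))
    (xk : EuclideanSpace ℝ (Fin n))
    -- the row-submatrix F'_I(x_k) of the Jacobian
    (J : Matrix {i // i ∈ S} (Fin n) ℝ)
    (hJdef : J = Matrix.of fun (i : {i // i ∈ S}) (j : Fin n) => grad i.1 xk j)
    -- g = (F'_I(x_k))ᵀ F_I(x_k)
    (g : EuclideanSpace ℝ (Fin n))
    (hgdef : g = ∑ i ∈ S, F i xk • grad i xk)
    (hg : g ≠ 0)
    (δ : ℝ) (hδ0 : 0 < δ) (hδ2 : δ < 2 * (1 - η))
    (xk1 : EuclideanSpace ℝ (Fin n))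
    -- x_{k+1} = x_k − δ (‖F_I(x_k)‖₂² / ‖g‖₂²) g
    (hupd : xk1 = xk - (δ * (∑ i ∈ S, (F i xk) ^ 2) / ‖g‖ ^ 2) • g) :
    ‖xk1 - xstar‖ ^ 2
      ≤ (1 - (2 * (1 - η) * δ - δ ^ 2) / ((1 + η ^ 2) * kappa J ^ 2))
          * ‖xk - xstar‖ ^ 2 := by
  set r : {i // i ∈ S} → ℝ := fun i => F i xk
  have hJg : Jᵀ *ᵥ r = g.ofLp := by
    ext j
    simp [hJdef, hgdef, r, mulVec, dotProduct, WithLp.ofLp_sum, mul_comm,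
      Finset.sum_attach S (fun i => F i xk * grad i xk j)]
  have hr : ∑ i ∈ S, F i xk ^ 2 = r ⬝ᵥ r := by
    simp [dotProduct, r, sq, Finset.sum_attach S (fun i => F i xk * F i xk)]
  have hcone : ∀ i, |r i - (J *ᵥ (xk - xstar).ofLp) i| ≤ η * |r i| := fun i => by
    simpa [hstar, hJdef, r, mulVec, dotProduct] using hltcc i xk xstar
  have hstep : (xk1 - xstar).ofLp
      = (xk - xstar).ofLp - (δ * (r ⬝ᵥ r) / ((Jᵀ *ᵥ r) ⬝ᵥ (Jᵀ *ᵥ r))) • (Jᵀ *ᵥ r) := by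
    rw [hupd, sub_right_comm, hJg, hr, EuclideanSpace.real_norm_sq_eq_dotProduct g]
    rfl
  rw [EuclideanSpace.real_norm_sq_eq_dotProduct, EuclideanSpace.real_norm_sq_eq_dotProduct, hstep]
  refine kaczmarz_step_dotProduct_le J hη0 hδ0.le hδ2.le hcone ?_
  rwa [hJg, Ne, WithLp.ofLp_eq_zero]

/-- Theorem 4: one step of the averaging block nonlinear Kaczmarz method
with adaptive stepsize, `δ ∈ (0, 2(1−η))`, satisfies
`‖x_{k+1} − x⋆‖₂² ≤ (1 − (2(1−η)δ − δ²)/((1+η²) κ²(F'_I(x_k)))) ‖x_k − x⋆‖₂²`. -/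
theorem abnk_adaptive_stepsize_convergence_factor
    {n m : ℕ}
    (F : Fin m → EuclideanSpace ℝ (Fin n) → ℝ)
    (grad : Fin m → EuclideanSpace ℝ (Fin n) → EuclideanSpace ℝ (Fin n))
    (η : ℝ) (hη0 : 0 ≤ η) (hη : η < 1 / 2)
    -- F is differentiable with Jacobian whose i-th row is ∇F_i
    (hdiff : ∀ i x, HasGradientAt (F i) (grad i x) x)
    -- local tangential cone condition with constant η
    (hltcc : ∀ i (x₁ x₂ : EuclideanSpace ℝ (Fin n)),
      |F i x₁ - F i x₂ - ∑ j, grad i x₁ j * (x₁ j - x₂ j)| ≤ η * |F i x₁ - F i x₂|)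
    (xstar : EuclideanSpace ℝ (Fin n)) (hstar : ∀ i, F i xstar = 0)
    (S : Finset (Fin m)) (hS : S.Nonempty)
    (xk : EuclideanSpace ℝ (Fin n))
    -- the row-submatrix F'_I(x_k) of the Jacobian
    (J : Matrix {i // i ∈ S} (Fin n) ℝ)
    (hJdef : J = Matrix.of fun (i : {i // i ∈ S}) (j : Fin n) => grad i.1 xk j)
    -- F'_I(x_k) has full column rank
    (hrank : J.rank = n)
    -- g = (F'_I(x_k))ᵀ F_I(x_k)
    (g : EuclideanSpace ℝ (Fin n))
    (hgdef : g = ∑ i ∈ S, F i xk • grad i xk)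
    (hg : g ≠ 0)
    (δ : ℝ) (hδ0 : 0 < δ) (hδ2 : δ < 2 * (1 - η))
    (xk1 : EuclideanSpace ℝ (Fin n))
    -- x_{k+1} = x_k − δ (‖F_I(x_k)‖₂² / ‖g‖₂²) g
    (hupd : xk1 = xk - (δ * (∑ i ∈ S, (F i xk) ^ 2) / ‖g‖ ^ 2) • g) :
    ‖xk1 - xstar‖ ^ 2
      ≤ (1 - (2 * (1 - η) * δ - δ ^ 2) / ((1 + η ^ 2) * kappa J ^ 2))
          * ‖xk - xstar‖ ^ 2 :=
  abnk_adaptive_stepsize_convergence_factor_general F grad η hη0 hltcc xstar hstar S xk J hJdef g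
    hgdef hg δ hδ0 hδ2 xk1 hupd
end
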